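/- Let X ⊆ ℝ^d, ρ ≥ 1, P a Borel probability measure on X with finite ρ-th moment, R = {R_1,…,R_N} a measurable partition of X, and C = {c_1,…,c_N} ⊂ X. Let f : X → ℝ^q be the affine map f(x) = Ax + b with A ∈ ℝ^{q×d}, b ∈ ℝ^q, and let ‖A‖ := sup_{x ≠ 0} ‖Ax‖/‖x‖ be the induced operator norm. Define θ_d := ( Σ_{k=1}^N ∫_{R_k} ‖x − c_k‖^ρ dP(x) )^{1/ρ}. Then for any θ ≥ 0, sup_{Q ∈ B_θ(P)} W_ρ(f#Q, f#Δ_{R,C}#P) ≤ ‖A‖ (θ + θ_d). -/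

import Mathlib

open MeasureTheory ENNReal

noncomputable section

/-- `ℝ^d` with the Euclidean norm. -/
abbrev Euc (d : ℕ) : Type := EuclideanSpace ℝ (Fin d)

/-- The set of couplings `Γ(μ, ν)` of two measures: probability measures on the product
whose first marginal is `μ` and second marginal is `ν`. -/
def Couplings {β : Type*} [MeasurableSpace β] (μ ν : Measure β) :
    Set (Measure (β × β)) :=
  {γ | IsProbabilityMeasure γ ∧ γ.map Prod.fst = μ ∧ γ.map Prod.snd = ν}

/-- The ρ-Wasserstein distance
`W_ρ(μ, ν) = (inf_{γ ∈ Γ(μ,ν)} ∫ ‖x - y‖^ρ dγ(x,y))^{1/ρ}`. -/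
noncomputable def Wass {β : Type*} [MeasurableSpace β] [NormedAddCommGroup β]
    (ρ : ℝ) (μ ν : Measure β) : ℝ :=
  ((⨅ γ ∈ Couplings μ ν, ∫⁻ p, ENNReal.ofReal (‖p.1 - p.2‖ ^ ρ) ∂γ).toReal) ^ (1/ρ)

/-- `μ` has finite ρ-th moment: `∫ ‖x‖^ρ dμ(x) < ∞`. -/
def HasFiniteMoment {β : Type*} [MeasurableSpace β] [NormedAddCommGroup β]
    (ρ : ℝ) (μ : Measure β) : Prop :=
  ∫⁻ x, ENNReal.ofReal (‖x‖ ^ ρ) ∂μ < ⊤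

/-- A measurable partition of a set `X` into `N` regions. -/
def IsMeasPartition {β : Type*} [MeasurableSpace β] {N : ℕ}
    (R : Fin N → Set β) (X : Set β) : Prop :=
  (∀ i, MeasurableSet (R i)) ∧ (⋃ i, R i) = X ∧ ∀ i j, i ≠ j → R i ∩ R j = ∅

/-- The quantization operator `Δ_{R,C}(x) = Σ_i c_i 1_{R_i}(x)`. -/
noncomputable def quantMap {β : Type*} [AddCommMonoid β] {N : ℕ}
    (R : Fin N → Set β) (c : Fin N → β) (x : β) : β :=
  ∑ i, (R i).indicator (fun _ => c i) x

/-!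
Since `f` is `‖A‖`-Lipschitz, `W_ρ(f#Q, f#Δ#P) ≤ ‖A‖ W_ρ(Q, Δ#P)`. Pushing a coupling `γ` of
`P` and `Q` forward by `Δ × id` and applying Minkowski's inequality in `L^ρ(γ)` gives
`W_ρ(Δ#P, Q) ≤ ‖Δ - id‖_{L^ρ(P)} + W_ρ(P, Q)`, and the quantization error `‖Δ - id‖_{L^ρ(P)}`
is exactly `θ_d`. Working with the `ℝ≥0∞`-valued distance (the infimum over couplings of the
`L^ρ` norm of `x - y`) lets both estimates pass to the infimum without an `ε`-argument; the
finite moments make `W_ρ(P, Q)` finite, so that the hypothesis `W_ρ(P, Q) ≤ θ` can be read back.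
-/

open Function
open scoped NNReal

section Couplings

variable {E F : Type*} [MeasurableSpace E] [MeasurableSpace F] {μ ν : Measure E}
  {γ : Measure (E × E)}

theorem prod_mem_couplings [IsProbabilityMeasure μ] [IsProbabilityMeasure ν] :
    μ.prod ν ∈ Couplings μ ν :=
  ⟨inferInstance, by simp, by simp⟩

theorem map_swap_mem_couplings (hγ : γ ∈ Couplings μ ν) : γ.map Prod.swap ∈ Couplings ν μ := by
  obtain ⟨hprob, h₁, h₂⟩ := hγ
  refine ⟨Measure.isProbabilityMeasure_map measurable_swap.aemeasurable, ?_, ?_⟩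
  · rw [Measure.map_map measurable_fst measurable_swap]; exact h₂
  · rw [Measure.map_map measurable_snd measurable_swap]; exact h₁

theorem map_prodMap_mem_couplings {f g : E → F} (hf : Measurable f) (hg : Measurable g)
    (hγ : γ ∈ Couplings μ ν) : γ.map (Prod.map f g) ∈ Couplings (μ.map f) (ν.map g) := by
  obtain ⟨hprob, h₁, h₂⟩ := hγ
  refine ⟨Measure.isProbabilityMeasure_map (hf.prodMap hg).aemeasurable, ?_, ?_⟩
  · rw [Measure.map_map measurable_fst (hf.prodMap hg), Prod.map_fst',
      ← Measure.map_map hf measurable_fst, h₁]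
  · rw [Measure.map_map measurable_snd (hf.prodMap hg), Prod.map_snd',
      ← Measure.map_map hg measurable_snd, h₂]

end Couplings

theorem eLpNorm_ofReal_eq_lintegral_ofReal_rpow {α F : Type*} [MeasurableSpace α]
    [NormedAddCommGroup F] {ρ : ℝ} (hρ : 0 < ρ) (f : α → F) (μ : Measure α) :
    eLpNorm f (ENNReal.ofReal ρ) μ = (∫⁻ x, ENNReal.ofReal (‖f x‖ ^ ρ) ∂μ) ^ (1 / ρ) := by
  simp_rw [eLpNorm_eq_lintegral_rpow_enorm_toReal (by simpa using hρ) ENNReal.ofReal_ne_top,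
    ENNReal.toReal_ofReal hρ.le, ← ofReal_norm, ENNReal.ofReal_rpow_of_nonneg (norm_nonneg _) hρ.le]

/-- The Wasserstein distance in `ℝ≥0∞`; unlike `Wass`, it does not send an infinite transport
cost to `0`. -/
def eWass {E : Type*} [MeasurableSpace E] [NormedAddCommGroup E] (p : ℝ≥0∞) (μ ν : Measure E) :
    ℝ≥0∞ :=
  ⨅ γ ∈ Couplings μ ν, eLpNorm (fun z : E × E => z.1 - z.2) p γ

section eWass

variable {E : Type*} [NormedAddCommGroup E] [MeasurableSpace E] {p : ℝ≥0∞}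

theorem Wass_eq_toReal_eWass {ρ : ℝ} (hρ : 0 < ρ) (μ ν : Measure E) :
    Wass ρ μ ν = (eWass (ENNReal.ofReal ρ) μ ν).toReal := by
  have hinf := (ENNReal.orderIsoRpow (1 / ρ) (by positivity)).map_iInf₂
    fun γ (_ : γ ∈ Couplings μ ν) => ∫⁻ z, ENNReal.ofReal (‖z.1 - z.2‖ ^ ρ) ∂γ
  simp only [ENNReal.orderIsoRpow_apply,
    ← eLpNorm_ofReal_eq_lintegral_ofReal_rpow hρ] at hinf
  rw [Wass, ENNReal.toReal_rpow, hinf, eWass]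

theorem eWass_le_eLpNorm {μ ν : Measure E} {γ : Measure (E × E)} (hγ : γ ∈ Couplings μ ν) :
    eWass p μ ν ≤ eLpNorm (fun z : E × E => z.1 - z.2) p γ :=
  iInf₂_le γ hγ

theorem eWass_lt_top {μ ν : Measure E} [IsProbabilityMeasure μ] [IsProbabilityMeasure ν]
    (hμ : MemLp id p μ) (hν : MemLp id p ν) : eWass p μ ν < ⊤ :=
  (eWass_le_eLpNorm prod_mem_couplings).trans_lt
    ((hμ.comp_measurePreserving measurePreserving_fst).sub
      (hν.comp_measurePreserving measurePreserving_snd)).eLpNorm_lt_top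

variable [BorelSpace E]

theorem eWass_map_le_of_lipschitzWith {F : Type*} [NormedAddCommGroup F] [MeasurableSpace F]
    [BorelSpace F] [SecondCountableTopology F] {K : ℝ≥0} {f : E → F} (hf : LipschitzWith K f)
    (p : ℝ≥0∞) (μ ν : Measure E) [IsProbabilityMeasure μ] [IsProbabilityMeasure ν] :
    eWass p (μ.map f) (ν.map f) ≤ K * eWass p μ ν := by
  have : Nonempty (Couplings μ ν) := ⟨⟨_, prod_mem_couplings⟩⟩
  have hmf : Measurable f := hf.continuous.measurable
  conv_rhs => rw [eWass, iInf_subtype', ENNReal.mul_iInf (by simp)]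
  refine le_iInf fun ⟨γ, hγ⟩ => ?_
  calc eWass p (μ.map f) (ν.map f)
      ≤ eLpNorm (fun z : F × F => z.1 - z.2) p (γ.map (Prod.map f f)) :=
        eWass_le_eLpNorm (map_prodMap_mem_couplings hmf hmf hγ)
    _ = eLpNorm (fun z : E × E => f z.1 - f z.2) p γ :=
        eLpNorm_map_measure (by fun_prop) (hmf.prodMap hmf).aemeasurable
    _ ≤ K * eLpNorm (fun z : E × E => z.1 - z.2) p γ :=
        eLpNorm_le_nnreal_smul_eLpNorm_of_ae_le_mul
          (ae_of_all _ fun z => by exact_mod_cast hf.norm_sub_le z.1 z.2) p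

variable [SecondCountableTopology E]

theorem eWass_comm (p : ℝ≥0∞) (μ ν : Measure E) : eWass p μ ν = eWass p ν μ := by
  suffices ∀ μ ν : Measure E, eWass p ν μ ≤ eWass p μ ν from le_antisymm (this _ _) (this _ _)
  intro μ ν
  refine le_iInf₂ fun γ hγ => ?_
  calc eWass p ν μ ≤ eLpNorm (fun z : E × E => z.1 - z.2) p (γ.map Prod.swap) :=
        eWass_le_eLpNorm (map_swap_mem_couplings hγ)
    _ = eLpNorm (fun z : E × E => z.1 - z.2) p γ := by
        rw [eLpNorm_map_measure (by fun_prop) measurable_swap.aemeasurable]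
        exact eLpNorm_sub_comm _ _ p γ

theorem eWass_map_le_eLpNorm_add (hp : 1 ≤ p) {g : E → E} (hg : Measurable g)
    (μ ν : Measure E) :
    eWass p (μ.map g) ν ≤ eLpNorm (fun x => g x - x) p μ + eWass p μ ν := by
  rw [add_comm, ← tsub_le_iff_right]
  refine le_iInf₂ fun (γ : Measure (E × E)) hγ => tsub_le_iff_right.2 ?_
  calc eWass p (μ.map g) ν
      ≤ eLpNorm (fun z : E × E => z.1 - z.2) p (γ.map (Prod.map g id)) := by
        simpa only [Measure.map_id] using
          eWass_le_eLpNorm (p := p) (map_prodMap_mem_couplings hg measurable_id hγ)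
    _ = eLpNorm ((fun z : E × E => z.1 - z.2) + fun z => g z.1 - z.1) p γ := by
        rw [eLpNorm_map_measure (by fun_prop) (by fun_prop)]
        congr 1
        ext z
        simp
    _ ≤ eLpNorm (fun z : E × E => z.1 - z.2) p γ + eLpNorm (fun z : E × E => g z.1 - z.1) p γ :=
        eLpNorm_add_le (by fun_prop) (by fun_prop) hp
    _ = eLpNorm (fun z : E × E => z.1 - z.2) p γ + eLpNorm (fun x => g x - x) p μ := by
        rw [← hγ.2.1, eLpNorm_map_measure (by fun_prop) (by fun_prop)]
        rfl

end eWass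

section Quantization

variable {β : Type*} {N : ℕ} {R : Fin N → Set β} {c : Fin N → β} {X : Set β}

theorem quantMap_eq_of_mem [AddCommMonoid β] (hR : Pairwise (Disjoint on R))
    {k : Fin N} {x : β} (hx : x ∈ R k) : quantMap R c x = c k := by
  rw [quantMap, Finset.sum_eq_single k (fun i _ hik => Set.indicator_of_notMem
    (Set.disjoint_left.1 (hR hik.symm) hx) _) (by simp), Set.indicator_of_mem hx]

variable [MeasurableSpace β]

theorem IsMeasPartition.pairwise_disjoint (hR : IsMeasPartition R X) : Pairwise (Disjoint on R) :=
  fun i j hij => Set.disjoint_iff_inter_eq_empty.2 (hR.2.2 i j hij)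

theorem integral_eq_sum_setIntegral_of_isMeasPartition {G : Type*} [NormedAddCommGroup G]
    [NormedSpace ℝ G] (hR : IsMeasPartition R X) {μ : Measure β} (hX : μ Xᶜ = 0) {F : β → G}
    (hF : Integrable F μ) : ∫ x, F x ∂μ = ∑ k, ∫ x in R k, F x ∂μ := by
  rw [← integral_iUnion_fintype hR.1 hR.pairwise_disjoint fun k => hF.integrableOn,
    Measure.restrict_eq_self_of_ae_mem (by rw [hR.2.1]; exact hX)]

variable [NormedAddCommGroup β]

theorem memLp_quantMap (hR : ∀ i, MeasurableSet (R i)) (p : ℝ≥0∞) (μ : Measure β)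
    [IsFiniteMeasure μ] : MemLp (quantMap R c) p μ := by
  have : quantMap R c = ∑ i, (R i).indicator fun _ => c i := by
    ext x
    simp [quantMap]
  rw [this]
  exact memLp_finsetSum' _ fun i _ =>
    memLp_indicator_const p (hR i) (c i) (Or.inr (measure_ne_top μ _))

end Quantization

section Moments

variable {E : Type*} [NormedAddCommGroup E] [MeasurableSpace E] [BorelSpace E]
  [SecondCountableTopology E] {ρ : ℝ}

theorem HasFiniteMoment.memLp_id (hρ : 0 < ρ) {μ : Measure E} (h : HasFiniteMoment ρ μ) :
    MemLp id (ENNReal.ofReal ρ) μ := by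
  refine ⟨aestronglyMeasurable_id, ?_⟩
  rw [eLpNorm_ofReal_eq_lintegral_ofReal_rpow hρ]
  exact ENNReal.rpow_lt_top_of_nonneg (by positivity) h.ne

theorem measurable_quantMap {N : ℕ} {R : Fin N → Set E} (c : Fin N → E)
    (hR : ∀ i, MeasurableSet (R i)) : Measurable (quantMap R c) :=
  Finset.measurable_fun_sum _ fun i _ => measurable_const.indicator (hR i)

theorem eLpNorm_quantMap_sub_eq (hρ : 0 < ρ) {N : ℕ} {R : Fin N → Set E} (c : Fin N → E)
    {X : Set E} (hR : IsMeasPartition R X) {μ : Measure E} [IsFiniteMeasure μ] (hX : μ Xᶜ = 0)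
    (hμ : HasFiniteMoment ρ μ) :
    eLpNorm (fun x => quantMap R c x - x) (ENNReal.ofReal ρ) μ =
      ENNReal.ofReal ((∑ k, ∫ x in R k, ‖x - c k‖ ^ ρ ∂μ) ^ (1 / ρ)) := by
  have hp : ENNReal.ofReal ρ ≠ 0 := by simpa using hρ
  have hmem : MemLp (fun x => quantMap R c x - x) (ENNReal.ofReal ρ) μ :=
    (memLp_quantMap hR.1 _ μ).sub (hμ.memLp_id hρ)
  rw [hmem.eLpNorm_eq_integral_rpow_norm hp ENNReal.ofReal_ne_top, ENNReal.toReal_ofReal hρ.le,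
    integral_eq_sum_setIntegral_of_isMeasPartition hR hX
      (by simpa [ENNReal.toReal_ofReal hρ.le] using
        hmem.integrable_norm_rpow hp ENNReal.ofReal_ne_top), one_div]
  congr 3 with k
  refine setIntegral_congr_fun (hR.1 k) fun x hx => ?_
  rw [quantMap_eq_of_mem hR.pairwise_disjoint hx, norm_sub_rev]

end Moments

theorem stmt5_general {d q N : ℕ} (ρ : ℝ) (hρ : 1 ≤ ρ) (θ : ℝ)
    (X : Set (Euc d))
    (P : Measure (Euc d)) (hP : IsProbabilityMeasure P) (hPX : P X = 1)
    (hPm : HasFiniteMoment ρ P)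
    (R : Fin N → Set (Euc d)) (hR : IsMeasPartition R X)
    (c : Fin N → Euc d)
    (A : Euc d →L[ℝ] Euc q) (b : Euc q)
    (θd : ℝ) (hθd : θd = (∑ k, ∫ x in R k, ‖x - c k‖ ^ ρ ∂P) ^ (1/ρ)) :
    ∀ Q : Measure (Euc d), IsProbabilityMeasure Q → Q X = 1 → HasFiniteMoment ρ Q →
      Wass ρ P Q ≤ θ →
      Wass ρ (Q.map (fun x => A x + b))
          ((P.map (quantMap R c)).map (fun x => A x + b)) ≤ ‖A‖ * (θ + θd) := by
  intro Q hQ _ hQm hWQ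
  have hρ0 : 0 < ρ := zero_lt_one.trans_le hρ
  have hf : LipschitzWith ‖A‖₊ fun x => A x + b := by
    simpa using A.lipschitz.add (LipschitzWith.const b)
  have hX : P Xᶜ = 0 := (prob_compl_eq_zero_iff (hR.2.1 ▸ .iUnion hR.1)).2 hPX
  have : IsProbabilityMeasure (P.map (quantMap R c)) :=
    Measure.isProbabilityMeasure_map (measurable_quantMap c hR.1).aemeasurable
  rw [Wass_eq_toReal_eWass hρ0] at hWQ ⊢
  have hθ : 0 ≤ θ := ENNReal.toReal_nonneg.trans hWQ
  have hθd0 : 0 ≤ θd := hθd ▸ by positivity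
  have hPQ : eWass (ENNReal.ofReal ρ) P Q ≤ ENNReal.ofReal θ :=
    (ENNReal.le_ofReal_iff_toReal_le
      (eWass_lt_top (hPm.memLp_id hρ0) (hQm.memLp_id hρ0)).ne hθ).2 hWQ
  refine ENNReal.toReal_le_of_le_ofReal (by positivity) ?_
  calc eWass (ENNReal.ofReal ρ) (Q.map _) ((P.map (quantMap R c)).map _)
      ≤ ‖A‖₊ * eWass (ENNReal.ofReal ρ) (P.map (quantMap R c)) Q := by
        rw [← eWass_comm]
        exact eWass_map_le_of_lipschitzWith hf _ _ _
    _ ≤ ‖A‖₊ * (ENNReal.ofReal θd + ENNReal.ofReal θ) := by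
        gcongr
        rw [hθd, ← eLpNorm_quantMap_sub_eq hρ0 c hR hX hPm]
        exact eWass_map_le_eLpNorm_add (ENNReal.one_le_ofReal.2 hρ)
          (measurable_quantMap c hR.1) P Q |>.trans (add_le_add_right hPQ _)
    _ = ENNReal.ofReal (‖A‖ * (θ + θd)) := by
        rw [ENNReal.ofReal_mul (norm_nonneg _), ENNReal.ofReal_add hθ hθd0, add_comm, ofReal_norm]
        rfl

/-- linear case. For the affine map `f(x) = A x + b`, every `Q ∈ B_θ(P)`
satisfies `W_ρ(f#Q, f#Δ_{R,C}#P) ≤ ‖A‖ (θ + θ_d)`, where `‖A‖` is the induced operator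
norm of `A`. -/
theorem stmt5 {d q N : ℕ} (ρ : ℝ) (hρ : 1 ≤ ρ) (θ : ℝ) (hθ : 0 ≤ θ)
    (X : Set (Euc d)) (hXm : MeasurableSet X)
    (P : Measure (Euc d)) (hP : IsProbabilityMeasure P) (hPX : P X = 1)
    (hPm : HasFiniteMoment ρ P)
    (R : Fin N → Set (Euc d)) (hR : IsMeasPartition R X)
    (c : Fin N → Euc d) (hc : ∀ k, c k ∈ X)
    (A : Euc d →L[ℝ] Euc q) (b : Euc q)
    (θd : ℝ) (hθd : θd = (∑ k, ∫ x in R k, ‖x - c k‖ ^ ρ ∂P) ^ (1/ρ)) :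
    ∀ Q : Measure (Euc d), IsProbabilityMeasure Q → Q X = 1 → HasFiniteMoment ρ Q →
      Wass ρ P Q ≤ θ →
      Wass ρ (Q.map (fun x => A x + b))
          ((P.map (quantMap R c)).map (fun x => A x + b)) ≤ ‖A‖ * (θ + θd) :=
  stmt5_general ρ hρ θ X P hP hPX hPm R hR c A b θd hθd
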